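/- Let 𝕜 be a commutative ring and n ≥ 1 an integer. Consider the cochain complex of 𝕜-modules C^0 → C^1 → ⋯ → C^n, where C^0 = 𝕜, C^m = 𝕜 ⊕ 𝕜 for 1 ≤ m ≤ n−1, C^n = 𝕜, with differentials: d^0(x) = (x, x) if n ≥ 2 (and d^0 = id_𝕜 if n = 1); d^m(x, y) = (x − y, x − y) for 1 ≤ m ≤ n−2; and d^{n−1}(x, y) = x − y for n ≥ 2. Then this complex is exact: d^0 is injective, ker d^m = im d^{m−1} for every 1 ≤ m ≤ n−1, and d^{n−1} is surjective. -/

import Mathlib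

/-!
Every differential in the middle factors as `δ = d⁰ ∘ d^{n-1}`, where `d⁰ : x ↦ (x, x)` is
injective and `d^{n-1} : (x, y) ↦ x - y` is surjective with kernel the diagonal, which is the
image of `d⁰`. Hence `ker δ = ker d^{n-1}` and `im δ = im d⁰`, and all four kernels and images
that occur are the diagonal.
-/

namespace StrandComplex

variable {R M : Type*} [Ring R] [AddCommGroup M] [Module R M]
  {f : M →ₗ[R] M × M} {g : M × M →ₗ[R] M}

theorem injective_of_apply_eq_diag (hf : ∀ x, f x = (x, x)) : Function.Injective f :=
  fun x y h => by simpa [hf] using congrArg Prod.fst h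

theorem surjective_of_apply_eq_sub (hg : ∀ p, g p = p.1 - p.2) : Function.Surjective g :=
  fun x => ⟨(x, 0), by simp [hg]⟩

theorem ker_eq_range_of_diag_of_sub (hf : ∀ x, f x = (x, x)) (hg : ∀ p, g p = p.1 - p.2) :
    LinearMap.ker g = LinearMap.range f := by
  ext ⟨x, y⟩
  simp only [LinearMap.mem_ker, LinearMap.mem_range, hg, hf, sub_eq_zero, Prod.ext_iff]
  exact ⟨fun h => ⟨x, rfl, h⟩, fun ⟨z, hx, hy⟩ => hx ▸ hy⟩

theorem eq_comp_of_apply_eq_sub_diag {h : M × M →ₗ[R] M × M}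
    (hf : ∀ x, f x = (x, x)) (hg : ∀ p, g p = p.1 - p.2)
    (hh : ∀ p, h p = (p.1 - p.2, p.1 - p.2)) : h = f ∘ₗ g :=
  LinearMap.ext fun p => by simp [hh, hf, hg]

end StrandComplex

open StrandComplex in
theorem stmt_13 (𝕜 : Type*) [CommRing 𝕜] (n : ℕ)
    (d0 : 𝕜 →ₗ[𝕜] 𝕜 × 𝕜) (hd0 : ∀ x, d0 x = (x, x))
    (δ : 𝕜 × 𝕜 →ₗ[𝕜] 𝕜 × 𝕜) (hδ : ∀ p, δ p = (p.1 - p.2, p.1 - p.2))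
    (dl : 𝕜 × 𝕜 →ₗ[𝕜] 𝕜) (hdl : ∀ p, dl p = p.1 - p.2) :
    -- `n = 1`: the complex is `𝕜 → 𝕜` with differential the identity, which is exact
    (n = 1 → Function.Injective (LinearMap.id : 𝕜 →ₗ[𝕜] 𝕜) ∧
      Function.Surjective (LinearMap.id : 𝕜 →ₗ[𝕜] 𝕜)) ∧
    -- `n ≥ 2`: `d⁰ = d0` is injective and `d^{n-1} = dl` is surjective
    (2 ≤ n → Function.Injective d0 ∧ Function.Surjective dl) ∧
    -- `n = 2`: exactness at `C¹` means `ker d¹ = im d⁰` with `d¹ = dl`, `d⁰ = d0`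
    (n = 2 → LinearMap.ker dl = LinearMap.range d0) ∧
    -- `n ≥ 3`: exactness at `C¹` (`ker δ = im d0`) and at `C^{n-1}` (`ker dl = im δ`)
    (3 ≤ n → LinearMap.ker δ = LinearMap.range d0 ∧
      LinearMap.ker dl = LinearMap.range δ) ∧
    -- `n ≥ 4`: exactness at the middle terms `C^m`, `2 ≤ m ≤ n-2` (`ker δ = im δ`)
    (4 ≤ n → LinearMap.ker δ = LinearMap.range δ) := by
  have hinj := injective_of_apply_eq_diag hd0
  have hsurj := surjective_of_apply_eq_sub hdl
  have hexact := ker_eq_range_of_diag_of_sub hd0 hdl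
  have hker : LinearMap.ker δ = LinearMap.ker dl := by
    rw [eq_comp_of_apply_eq_sub_diag hd0 hdl hδ,
      LinearMap.ker_comp_of_ker_eq_bot _ (LinearMap.ker_eq_bot.mpr hinj)]
  have hrange : LinearMap.range δ = LinearMap.range d0 := by
    rw [eq_comp_of_apply_eq_sub_diag hd0 hdl hδ,
      LinearMap.range_comp_of_range_eq_top _ (LinearMap.range_eq_top.mpr hsurj)]
  exact ⟨fun _ => ⟨Function.injective_id, Function.surjective_id⟩, fun _ => ⟨hinj, hsurj⟩,
    fun _ => hexact, fun _ => ⟨hker ▸ hexact, hrange ▸ hexact⟩,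
    fun _ => hker ▸ hrange ▸ hexact⟩
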